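/- Lemma 5.2(a) (bounds for the modified length). Fix real numbers δ and δ' with 0 < δ' < δ. Let s be a word (a list) over an alphabet partitioned into three classes: a-letters, θ-letters and q-letters, and define the modified length |s| as the minimum cost of a decomposition of s, where a decomposition is a factorization of s into consecutive blocks each of which is either a single letter or a θa-syllable (two adjacent letters, one a θ-letter and the other an a-letter, in either order), and the cost of a decomposition is the sum of δ for each single a-letter block, 1 for each single θ-letter or q-letter block, and 1 + δ' for each θa-syllable. Then, if s contains exactly d a-letters and exactly e letters that are not a-letters, one has e + d·δ ≥ |s| ≥ e + d·δ' + max(0, (d − e)·(δ − δ')) ≥ e + d·δ'. -/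
import Mathlib


/-- The three classes of letters: `a`-letters, `θ`-letters and `q`-letters. -/
inductive LetterKind : Type
  | a : LetterKind
  | θ : LetterKind
  | q : LetterKind
deriving DecidableEq

/-- A block of a decomposition: a single letter, or a `θa`-syllable consisting of two
adjacent letters. -/
inductive Block (α : Type*) : Type _
  | single : α → Block α
  | syll : α → α → Block α

/-- The list of letters of a block. -/
def Block.toList {α : Type*} : Block α → List α
  | .single x => [x]
  | .syll x y => [x, y]

/-- A block is valid if, in case it is a syllable, it consists of one `θ`-letter and one
`a`-letter, in either order. -/
def Block.Valid {α : Type*} (kind : α → LetterKind) : Block α → Prop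
  | .single _ => True
  | .syll x y => (kind x = LetterKind.θ ∧ kind y = LetterKind.a) ∨
      (kind x = LetterKind.a ∧ kind y = LetterKind.θ)

/-- The cost of a block: `δ` for a single `a`-letter, `1` for a single `θ`- or `q`-letter,
and `1 + δ'` for a `θa`-syllable. -/
def Block.cost {α : Type*} (kind : α → LetterKind) (δ δ' : ℝ) : Block α → ℝ
  | .single x => if kind x = LetterKind.a then δ else 1
  | .syll _ _ => 1 + δ'

/-- The set of costs of all decompositions of the word `s` into single letters and
`θa`-syllables. -/
def decompositionCosts {α : Type*} (kind : α → LetterKind) (δ δ' : ℝ) (s : List α) :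
    Set ℝ :=
  {c | ∃ D : List (Block α), (∀ b ∈ D, b.Valid kind) ∧
    (D.map Block.toList).flatten = s ∧ (D.map (Block.cost kind δ δ')).sum = c}

/-- The modified length `|s|` of a word `s`: the minimum cost of a decomposition of `s`. -/
noncomputable def modLength {α : Type*} (kind : α → LetterKind) (δ δ' : ℝ) (s : List α) :
    ℝ :=
  sInf (decompositionCosts kind δ δ' s)


section Aux

variable {α : Type*}

/-- Per-block lower bound 1: cost ≥ (#non-a) + (#a)·δ'. -/
lemma block_lb1 (kind : α → LetterKind) (δ δ' : ℝ) (hδ' : 0 < δ') (hδ : δ' < δ)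
    (b : Block α) (hb : b.Valid kind) :
    ((b.toList.countP fun x => decide (kind x ≠ LetterKind.a)) : ℝ)
      + ((b.toList.countP fun x => decide (kind x = LetterKind.a)) : ℝ) * δ'
      ≤ b.cost kind δ δ' := by
  cases b with
  | single x =>
    by_cases h : kind x = LetterKind.a <;>
      simp [Block.toList, Block.cost, h] <;> linarith
  | syll x y =>
    rcases hb with ⟨hx, hy⟩ | ⟨hx, hy⟩ <;>
      simp [Block.toList, Block.cost, hx, hy] <;> linarith

/-- Per-block lower bound 2: cost ≥ (#a)·δ + (#non-a)·(1 - (δ - δ')). -/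
lemma block_lb2 (kind : α → LetterKind) (δ δ' : ℝ) (hδ' : 0 < δ') (hδ : δ' < δ)
    (b : Block α) (hb : b.Valid kind) :
    ((b.toList.countP fun x => decide (kind x = LetterKind.a)) : ℝ) * δ
      + ((b.toList.countP fun x => decide (kind x ≠ LetterKind.a)) : ℝ) * (1 - (δ - δ'))
      ≤ b.cost kind δ δ' := by
  cases b with
  | single x =>
    by_cases h : kind x = LetterKind.a <;>
      simp [Block.toList, Block.cost, h] <;> linarith
  | syll x y =>
    rcases hb with ⟨hx, hy⟩ | ⟨hx, hy⟩ <;>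
      simp [Block.toList, Block.cost, hx, hy] <;> linarith

lemma sum_count_eq (p : α → Bool) (D : List (Block α)) (s : List α)
    (hD : (D.map Block.toList).flatten = s) :
    (D.map fun b => ((b.toList.countP p : ℕ) : ℝ)).sum = (s.countP p : ℝ) := by
  subst hD
  rw [List.countP_flatten, Nat.cast_list_sum, List.map_map, List.map_map]
  rfl

lemma sum_map_add' (f g : Block α → ℝ) (D : List (Block α)) :
    (D.map fun b => f b + g b).sum = (D.map f).sum + (D.map g).sum := by
  induction D with
  | nil => simp
  | cons b D ih => simp [ih]; ring

lemma sum_map_mul' (f : Block α → ℝ) (c : ℝ) (D : List (Block α)) :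
    (D.map fun b => f b * c).sum = (D.map f).sum * c := by
  induction D with
  | nil => simp
  | cons b D ih => simp [ih]; ring

/-- Any decomposition cost is bounded below. -/
lemma cost_lb (kind : α → LetterKind) (δ δ' : ℝ) (hδ' : 0 < δ') (hδ : δ' < δ)
    (s : List α) (c : ℝ) (hc : c ∈ decompositionCosts kind δ δ' s) :
    ((s.countP fun x => decide (kind x ≠ LetterKind.a)) : ℝ)
      + ((s.countP fun x => decide (kind x = LetterKind.a)) : ℝ) * δ'
      + max 0 ((((s.countP fun x => decide (kind x = LetterKind.a)) : ℝ)
          - ((s.countP fun x => decide (kind x ≠ LetterKind.a)) : ℝ)) * (δ - δ')) ≤ c := by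
  obtain ⟨D, hval, hflat, hsum⟩ := hc
  set pa : α → Bool := fun x => decide (kind x = LetterKind.a)
  set pe : α → Bool := fun x => decide (kind x ≠ LetterKind.a)
  have h1 : ((s.countP pe : ℕ) : ℝ) + ((s.countP pa : ℕ) : ℝ) * δ' ≤ c := by
    rw [← hsum, ← sum_count_eq pe D s hflat, ← sum_count_eq pa D s hflat,
      ← sum_map_mul', ← sum_map_add']
    exact List.sum_le_sum fun b hb => block_lb1 kind δ δ' hδ' hδ b (hval b hb)
  have h2 : ((s.countP pa : ℕ) : ℝ) * δ + ((s.countP pe : ℕ) : ℝ) * (1 - (δ - δ')) ≤ c := by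
    rw [← hsum, ← sum_count_eq pe D s hflat, ← sum_count_eq pa D s hflat,
      ← sum_map_mul', ← sum_map_mul', ← sum_map_add']
    exact List.sum_le_sum fun b hb => block_lb2 kind δ δ' hδ' hδ b (hval b hb)
  rcases le_or_gt ((((s.countP pa : ℕ) : ℝ) - ((s.countP pe : ℕ) : ℝ)) * (δ - δ')) 0 with h | h
  · rw [max_eq_left h]; linarith
  · rw [max_eq_right h.le]; nlinarith

lemma singles_mem (kind : α → LetterKind) (δ δ' : ℝ) (s : List α) :
    ((s.countP fun x => decide (kind x ≠ LetterKind.a)) : ℝ)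
      + ((s.countP fun x => decide (kind x = LetterKind.a)) : ℝ) * δ
      ∈ decompositionCosts kind δ δ' s := by
  refine ⟨s.map Block.single, ?_, ?_, ?_⟩
  · intro b hb
    obtain ⟨x, _, rfl⟩ := List.mem_map.1 hb
    trivial
  · induction s with
    | nil => simp
    | cons x s ih => simpa [Block.toList] using ih
  · induction s with
    | nil => simp
    | cons x s ih =>
      simp only [List.map_cons, List.sum_cons, List.countP_cons, ih]
      by_cases h : kind x = LetterKind.a
      · simp only [ne_eq, decide_not]
        simp [Block.cost, h]
        push_cast; ring
      · simp only [ne_eq, decide_not]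
        simp [Block.cost, h]
        push_cast; ring

end Aux


/-- Lemma 5.2(a): if `s` has `d` `a`-letters and `e` non-`a`-letters, then
`e + d·δ ≥ |s| ≥ e + d·δ' + max 0 ((d − e)(δ − δ')) ≥ e + d·δ'`. -/
theorem modLength_bounds {α : Type*} (δ δ' : ℝ) (hδ' : 0 < δ') (hδ : δ' < δ)
    (kind : α → LetterKind) (s : List α) (d e : ℕ)
    (hd : d = s.countP fun x => decide (kind x = LetterKind.a))
    (he : e = s.countP fun x => decide (kind x ≠ LetterKind.a)) :
    modLength kind δ δ' s ≤ (e : ℝ) + (d : ℝ) * δ ∧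
    (e : ℝ) + (d : ℝ) * δ' + max 0 (((d : ℝ) - (e : ℝ)) * (δ - δ')) ≤
      modLength kind δ δ' s ∧
    (e : ℝ) + (d : ℝ) * δ' ≤
      (e : ℝ) + (d : ℝ) * δ' + max 0 (((d : ℝ) - (e : ℝ)) * (δ - δ')) := by
  subst hd he
  have hmem := singles_mem kind δ δ' s
  have hbdd : BddBelow (decompositionCosts kind δ δ' s) :=
    ⟨_, fun c hc => cost_lb kind δ δ' hδ' hδ s c hc⟩
  refine ⟨csInf_le hbdd hmem, le_csInf ⟨_, hmem⟩ (fun c hc => cost_lb kind δ δ' hδ' hδ s c hc),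
    le_add_of_nonneg_right (le_max_left 0 _)⟩
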